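/- Let a, c > 0, k > 0, 0 < V_ci < V_r, and let i be a positive integer. Then (k/(3·a^{k/3}·c^k))·∫_{a·V_ci³}^{a·V_r³} x^{k/3 + i − 1}·exp(−x^{k/3}/(a^{k/3}·c^k)) dx = a^i·c^{3i}·[γ(1 + 3i/k, (V_r/c)^k) − γ(1 + 3i/k, (V_ci/c)^k)]. Equivalently, if V is a Weibull random variable with scale c and shape k, the i-th moment of the harvested wind power restricted to the continuous range satisfies E[(a·V³)^i·1_{V_ci < V ≤ V_r}] = a^i·c^{3i}·[γ(1 + 3i/k, (V_r/c)^k) − γ(1 + 3i/k, (V_ci/c)^k)]. (i-th moment of the harvested wind power.) -/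

import Mathlib

/-! Both sides are truncated gamma integrals in disguise: the substitution `t = (x / b) ^ q`
turns `∫ x ^ (s - 1) * exp (-(x / b) ^ q)` over `[lo, hi]` into `b ^ s / q` times
`∫ t ^ (s / q - 1) * exp (-t)` over `[(lo / b) ^ q, (hi / b) ^ q]`. The power integral is the case
`b = a c³`, `q = k / 3`, where the endpoints `a V³` become `(V / c) ^ k`; the moment becomes,
after pushing `μ` forward to the Weibull law, the case `b = c`, `q = k`, `s = k + 3 i`. -/

open MeasureTheory Real

/-- The lower incomplete gamma function `γ(s, x) = ∫₀ˣ t^{s−1}·e^{−t} dt`. -/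
noncomputable def lowerGamma (s x : ℝ) : ℝ :=
  ∫ t in (0 : ℝ)..x, t ^ (s - 1) * Real.exp (-t)

/-- Weibull density with scale `c > 0` and shape `k > 0` (zero for `v ≤ 0`). -/
noncomputable def weibullDensity (c k v : ℝ) : ℝ :=
  if 0 < v then (k / c) * (v / c) ^ (k - 1) * Real.exp (-(v / c) ^ k) else 0

theorem intervalIntegrable_rpow_sub_one_mul_exp_neg {s x : ℝ} (hs : 0 < s) (hx : 0 ≤ x) :
    IntervalIntegrable (fun t => t ^ (s - 1) * exp (-t)) volume 0 x := by
  rw [intervalIntegrable_iff_integrableOn_Ioc_of_le hx]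
  simpa only [mul_comm] using (GammaIntegral_convergent hs).mono_set Set.Ioc_subset_Ioi_self

theorem lowerGamma_sub_lowerGamma {s x y : ℝ} (hs : 0 < s) (hx : 0 ≤ x) (hy : 0 ≤ y) :
    lowerGamma s y - lowerGamma s x = ∫ t in x..y, t ^ (s - 1) * exp (-t) :=
  intervalIntegral.integral_interval_sub_left (intervalIntegrable_rpow_sub_one_mul_exp_neg hs hy)
    (intervalIntegrable_rpow_sub_one_mul_exp_neg hs hx)

theorem integral_rpow_mul_exp_neg_div_rpow {b q s lo hi : ℝ} (hb : 0 < b) (hq : q ≠ 0)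
    (hlo : 0 < lo) (hhi : 0 < hi) :
    ∫ x in lo..hi, x ^ (s - 1) * exp (-(x / b) ^ q) =
      b ^ s / q * ∫ t in (lo / b) ^ q..(hi / b) ^ q, t ^ (s / q - 1) * exp (-t) := by
  have hpos : ∀ x ∈ Set.uIcc lo hi, 0 < x := fun x hx => (lt_min hlo hhi).trans_le hx.1
  have hderiv : ∀ x ∈ Set.uIcc lo hi,
      HasDerivAt (fun x => (x / b) ^ q) (1 / b * q * (x / b) ^ (q - 1)) x := fun x hx =>
    ((hasDerivAt_id x).div_const b).rpow_const (Or.inl (div_pos (hpos x hx) hb).ne')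
  have hcont : ContinuousOn (fun x => 1 / b * q * (x / b) ^ (q - 1)) (Set.uIcc lo hi) := fun x hx =>
    ((continuousAt_id.div_const b).rpow_const (Or.inl (div_pos (hpos x hx) hb).ne')).const_mul _
      |>.continuousWithinAt
  have hgcont : ContinuousOn (fun t => t ^ (s / q - 1) * exp (-t))
      ((fun x => (x / b) ^ q) '' Set.uIcc lo hi) := by
    rintro _ ⟨x, hx, rfl⟩
    have hφx : (x / b) ^ q ≠ 0 := (rpow_pos_of_pos (div_pos (hpos x hx) hb) q).ne'
    exact ((continuousAt_id.rpow_const (Or.inl hφx)).mul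
      (continuous_exp.comp continuous_neg).continuousAt).continuousWithinAt
  rw [← intervalIntegral.integral_comp_mul_deriv' hderiv hcont hgcont,
    ← intervalIntegral.integral_const_mul]
  refine intervalIntegral.integral_congr fun x hx => ?_
  have hxb : 0 < x / b := div_pos (hpos x hx) hb
  have hsplit : (x / b) ^ (s - q) * (x / b) ^ (q - 1) = x ^ (s - 1) / b ^ (s - 1) := by
    rw [← rpow_add hxb, div_rpow (hpos x hx).le hb.le]; ring_nf
  simp only [Function.comp_apply]
  rw [← rpow_mul hxb.le, mul_sub, mul_div_cancel₀ s hq, mul_one,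
    show b ^ s = b ^ (s - 1) * b by rw [rpow_sub_one hb.ne', div_mul_cancel₀ _ hb.ne']]
  field_simp
  rw [mul_assoc, hsplit, mul_div_cancel₀ _ (rpow_pos_of_pos hb _).ne']

theorem integral_rpow_mul_exp_neg_div_rpow_eq_lowerGamma_sub {b q s lo hi : ℝ} (hb : 0 < b)
    (hq : q ≠ 0) (hsq : 0 < s / q) (hlo : 0 < lo) (hhi : 0 < hi) :
    ∫ x in lo..hi, x ^ (s - 1) * exp (-(x / b) ^ q) =
      b ^ s / q * (lowerGamma (s / q) ((hi / b) ^ q) - lowerGamma (s / q) ((lo / b) ^ q)) := by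
  rw [integral_rpow_mul_exp_neg_div_rpow hb hq hlo hhi, lowerGamma_sub_lowerGamma hsq
    (rpow_nonneg (div_pos hlo hb).le q) (rpow_nonneg (div_pos hhi hb).le q)]

theorem pow_three_rpow_div_three {x : ℝ} (hx : 0 ≤ x) (r : ℝ) :
    (x ^ 3) ^ (r / 3) = x ^ r := by
  rw [← rpow_natCast, ← rpow_mul hx, Nat.cast_ofNat, mul_div_cancel₀ r three_ne_zero]

theorem setIntegral_preimage_eq_setIntegral_density_smul {Ω X E : Type*} [MeasurableSpace Ω]
    [MeasurableSpace X] [NormedAddCommGroup E] [NormedSpace ℝ E] {μ : Measure Ω}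
    {ν : Measure X} {V : Ω → X} {f : X → ℝ} {g : X → E} {s : Set X} (hV : Measurable V)
    (hlaw : μ.map V = ν.withDensity fun x => ENNReal.ofReal (f x)) (hf : Measurable f)
    (hf0 : ∀ x, 0 ≤ f x) (hg : AEStronglyMeasurable g (μ.map V)) (hs : MeasurableSet s) :
    ∫ ω in V ⁻¹' s, g (V ω) ∂μ = ∫ x in s, f x • g x ∂ν := by
  rw [← setIntegral_map hs hg hV.aemeasurable, hlaw,
    setIntegral_withDensity_eq_setIntegral_toReal_smul hf.ennreal_ofReal
      (ae_of_all _ fun _ => ENNReal.ofReal_lt_top) g hs]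
  simp_rw [ENNReal.toReal_ofReal (hf0 _)]

theorem measurable_weibullDensity (c k : ℝ) : Measurable (weibullDensity c k) :=
  Measurable.ite measurableSet_Ioi (by fun_prop) measurable_const

theorem weibullDensity_nonneg {c k : ℝ} (hc : 0 ≤ c) (hk : 0 ≤ k) (v : ℝ) :
    0 ≤ weibullDensity c k v := by
  unfold weibullDensity
  split_ifs <;> positivity

theorem setIntegral_Ioc_weibullDensity_mul_pow {c k lo hi : ℝ} (hc : 0 < c) (hk : 0 < k)
    (hlo : 0 < lo) (hle : lo ≤ hi) (n : ℕ) :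
    ∫ v in Set.Ioc lo hi, weibullDensity c k v * v ^ n =
      c ^ n * (lowerGamma (1 + n / k) ((hi / c) ^ k) - lowerGamma (1 + n / k) ((lo / c) ^ k)) := by
  have hdensity : ∀ v ∈ Set.uIcc lo hi, weibullDensity c k v * v ^ n =
      k / c ^ k * (v ^ ((k + n) - 1) * exp (-(v / c) ^ k)) := by
    intro v hv
    have hv : 0 < v := hlo.trans_le (Set.uIcc_of_le hle ▸ hv).1
    rw [weibullDensity, if_pos hv, div_rpow hv.le hc.le, add_sub_right_comm, rpow_add hv,
      rpow_natCast, rpow_sub_one hc.ne']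
    field_simp
  rw [← intervalIntegral.integral_of_le hle, intervalIntegral.integral_congr hdensity,
    intervalIntegral.integral_const_mul, integral_rpow_mul_exp_neg_div_rpow_eq_lowerGamma_sub hc
      hk.ne' (by positivity) hlo (hlo.trans_le hle), show (k + n) / k = 1 + n / k by field_simp,
    rpow_add hc, rpow_natCast]
  field_simp

theorem integral_rpow_mul_exp_neg_rpow_div_eq_lowerGamma_sub {a c k u w : ℝ} (ha : 0 < a)
    (hc : 0 < c) (hk : 0 < k) (hu : 0 < u) (hw : 0 < w) (n : ℕ) :
    k / (3 * a ^ (k / 3) * c ^ k) * ∫ x in (a * u ^ 3)..(a * w ^ 3),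
        x ^ (k / 3 + n - 1) * exp (-x ^ (k / 3) / (a ^ (k / 3) * c ^ k)) =
      a ^ n * c ^ (3 * n) *
        (lowerGamma (1 + 3 * n / k) ((w / c) ^ k) - lowerGamma (1 + 3 * n / k) ((u / c) ^ k)) := by
  have hb : 0 < a * c ^ 3 := by positivity
  have hb_rpow : (a * c ^ 3) ^ (k / 3) = a ^ (k / 3) * c ^ k := by
    rw [mul_rpow ha.le (by positivity), pow_three_rpow_div_three hc.le]
  have hbound : ∀ v, 0 < v → (a * v ^ 3 / (a * c ^ 3)) ^ (k / 3) = (v / c) ^ k := fun v hv => by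
    rw [mul_div_mul_left _ _ ha.ne', ← div_pow, pow_three_rpow_div_three (div_pos hv hc).le]
  have hexp : ∀ x ∈ Set.uIcc (a * u ^ 3) (a * w ^ 3), x ^ (k / 3 + n - 1) *
      exp (-x ^ (k / 3) / (a ^ (k / 3) * c ^ k)) =
        x ^ (k / 3 + n - 1) * exp (-(x / (a * c ^ 3)) ^ (k / 3)) := fun x hx => by
    have hx : 0 ≤ x := (le_min (by positivity : 0 ≤ a * u ^ 3) (by positivity)).trans hx.1
    rw [div_rpow hx hb.le, hb_rpow, neg_div]
  rw [intervalIntegral.integral_congr hexp,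
    integral_rpow_mul_exp_neg_div_rpow_eq_lowerGamma_sub (s := k / 3 + n) (q := k / 3) hb
      (by positivity) (by positivity) (by positivity) (by positivity), hbound u hu, hbound w hw,
    show (k / 3 + n) / (k / 3) = 1 + 3 * n / k by field_simp, rpow_add hb, hb_rpow, rpow_natCast]
  field_simp
  ring

theorem setIntegral_preimage_Ioc_pow_of_map_eq_weibull {Ω : Type*} [MeasurableSpace Ω]
    {μ : Measure Ω} {V : Ω → ℝ} {c k lo hi : ℝ} (hc : 0 < c) (hk : 0 < k) (hlo : 0 < lo)
    (hle : lo ≤ hi) (hV : Measurable V)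
    (hlaw : μ.map V = volume.withDensity fun v => ENNReal.ofReal (weibullDensity c k v))
    (n : ℕ) :
    ∫ ω in V ⁻¹' Set.Ioc lo hi, V ω ^ n ∂μ =
      c ^ n * (lowerGamma (1 + n / k) ((hi / c) ^ k) - lowerGamma (1 + n / k) ((lo / c) ^ k)) := by
  rw [setIntegral_preimage_eq_setIntegral_density_smul hV hlaw (measurable_weibullDensity c k)
    (weibullDensity_nonneg hc.le hk.le) (continuous_pow n).aestronglyMeasurable measurableSet_Ioc]
  exact setIntegral_Ioc_weibullDensity_mul_pow hc hk hlo hle n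

theorem wind_power_moment_general
    {Ω : Type*} [MeasurableSpace Ω] (μ : Measure Ω)
    (a c k Vci Vr : ℝ) (ha : 0 < a) (hc : 0 < c) (hk : 0 < k)
    (hVci : 0 < Vci) (hVr : Vci < Vr)
    (i : ℕ)
    (V : Ω → ℝ) (hV : Measurable V)
    (hlaw : μ.map V = volume.withDensity fun v => ENNReal.ofReal (weibullDensity c k v)) :
    (k / (3 * a ^ (k / 3) * c ^ k))
        * ∫ x in (a * Vci ^ 3)..(a * Vr ^ 3),
            x ^ (k / 3 + i - 1) * Real.exp (-x ^ (k / 3) / (a ^ (k / 3) * c ^ k)) =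
      a ^ i * c ^ (3 * i)
        * (lowerGamma (1 + 3 * i / k) ((Vr / c) ^ k)
          - lowerGamma (1 + 3 * i / k) ((Vci / c) ^ k)) ∧
    ∫ ω in {ω | Vci < V ω ∧ V ω ≤ Vr}, (a * V ω ^ 3) ^ i ∂μ =
      a ^ i * c ^ (3 * i)
        * (lowerGamma (1 + 3 * i / k) ((Vr / c) ^ k)
          - lowerGamma (1 + 3 * i / k) ((Vci / c) ^ k)) := by
  refine ⟨integral_rpow_mul_exp_neg_rpow_div_eq_lowerGamma_sub ha hc hk hVci (hVci.trans hVr) i,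
    ?_⟩
  have hmoment := setIntegral_preimage_Ioc_pow_of_map_eq_weibull hc hk hVci hVr.le hV hlaw (3 * i)
  push_cast at hmoment
  simp_rw [mul_pow, ← pow_mul]
  rw [integral_const_mul]
  exact congrArg (a ^ i * ·) hmoment |>.trans (by ring)

/-- **`i`-th moment of the harvested wind power.**
`(k/(3·a^{k/3}·c^k))·∫_{a·V_ci³}^{a·V_r³} x^{k/3+i−1}·exp(−x^{k/3}/(a^{k/3}·c^k)) dx
 = a^i·c^{3i}·[γ(1+3i/k, (V_r/c)^k) − γ(1+3i/k, (V_ci/c)^k)]`, and equivalently,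
for a Weibull wind speed `V`,
`E[(a·V³)^i·1_{V_ci < V ≤ V_r}]` equals the same closed form. -/
theorem wind_power_moment
    {Ω : Type*} [MeasurableSpace Ω] (μ : Measure Ω) [IsProbabilityMeasure μ]
    (a c k Vci Vr : ℝ) (ha : 0 < a) (hc : 0 < c) (hk : 0 < k)
    (hVci : 0 < Vci) (hVr : Vci < Vr)
    (i : ℕ) (hi : 0 < i)
    (V : Ω → ℝ) (hV : Measurable V)
    (hlaw : μ.map V = volume.withDensity fun v => ENNReal.ofReal (weibullDensity c k v)) :
    (k / (3 * a ^ (k / 3) * c ^ k))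
        * ∫ x in (a * Vci ^ 3)..(a * Vr ^ 3),
            x ^ (k / 3 + i - 1) * Real.exp (-x ^ (k / 3) / (a ^ (k / 3) * c ^ k)) =
      a ^ i * c ^ (3 * i)
        * (lowerGamma (1 + 3 * i / k) ((Vr / c) ^ k)
          - lowerGamma (1 + 3 * i / k) ((Vci / c) ^ k)) ∧
    ∫ ω in {ω | Vci < V ω ∧ V ω ≤ Vr}, (a * V ω ^ 3) ^ i ∂μ =
      a ^ i * c ^ (3 * i)
        * (lowerGamma (1 + 3 * i / k) ((Vr / c) ^ k)
          - lowerGamma (1 + 3 * i / k) ((Vci / c) ^ k)) :=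
  wind_power_moment_general μ a c k Vci Vr ha hc hk hVci hVr i V hV hlaw
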